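/- Let A be a sublocale of a frame L. Then: if A is connected, then for every open sublocale 𝔬(u) ⊇ A there exists a connected sublocale C with A ⊆ C ⊆ 𝔬(u); this in turn implies A is normally connected; and normal connectedness implies: for every complemented sublocale S of L, if A meets both S and L∖S, then A meets ∂S. -/
import Mathlib


open Order Set

variable {L : Type*} [Order.Frame L]

/-- A sublocale of a frame: closed under arbitrary meets and under Heyting implication
from arbitrary elements. -/
def IsSublocale (S : Set L) : Prop :=
  (∀ M ⊆ S, sInf M ∈ S) ∧ ∀ x : L, ∀ s ∈ S, x ⇨ s ∈ S

/-- The open sublocale associated to `u`. -/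
def oSub (u : L) : Set L := {x | u ⇨ x = x}

/-- The closed sublocale associated to `u`. -/
def cSub (u : L) : Set L := Set.Ici u

/-- Binary join of sublocales. -/
def vee (A B : Set L) : Set L := {x | ∃ M ⊆ A ∪ B, x = sInf M}

/-- Join of a family of sublocales. -/
def iJoin {ι : Type*} (S : ι → Set L) : Set L := {x | ∃ M ⊆ ⋃ i, S i, x = sInf M}

/-- Two sublocales meet if their intersection is not the void sublocale `{⊤}`. -/
def Meets (S T : Set L) : Prop := S ∩ T ≠ ({⊤} : Set L)

/-- The closure of a sublocale. -/
def clo (S : Set L) : Set L := Set.Ici (sInf S)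

/-- The index of the interior: the largest `u` with `oSub u ⊆ S`. -/
def intIdx (S : Set L) : L := sSup {u | oSub u ⊆ S}

/-- The interior of a sublocale: the largest open sublocale contained in it. -/
def intr (S : Set L) : Set L := oSub (intIdx S)

/-- The boundary of a sublocale: closure minus interior
(computed as `clo S ∩ cSub (intIdx S)`, since `cSub (intIdx S)` is the complement of
the interior). -/
def bd (S : Set L) : Set L := clo S ∩ cSub (intIdx S)

/-- The supplement of a sublocale. -/
def suppl (S : Set L) : Set L := ⋂₀ {T | IsSublocale T ∧ vee T S = Set.univ}

/-- A sublocale is complemented if it is disjoint from its supplement. -/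
def ComplementedSub (S : Set L) : Prop := S ∩ suppl S = ({⊤} : Set L)

/-- A sublocale is connected if it admits no separation by two closed sublocales. -/
def SubConnected (S : Set L) : Prop :=
  ∀ a b : L, S ⊆ vee (cSub a) (cSub b) → S ∩ cSub a ∩ cSub b = ({⊤} : Set L) →
    S ∩ cSub a = ({⊤} : Set L) ∨ S ∩ cSub b = ({⊤} : Set L)

/-- Separated sublocales. -/
def SepSub (P Q : Set L) : Prop :=
  clo P ∩ Q = ({⊤} : Set L) ∧ P ∩ clo Q = ({⊤} : Set L)

/-- A connected element of a frame. -/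
def ConnElem (v : L) : Prop := ∀ b c : L, v = b ⊔ c → b ⊓ c = ⊥ → b = ⊥ ∨ c = ⊥

/-- A locally connected frame: every element is a join of connected elements. -/
def LocConn (L : Type*) [Order.Frame L] : Prop :=
  ∀ x : L, ∃ F : Set L, (∀ v ∈ F, ConnElem v) ∧ x = sSup F

/-- A strongly locally connected frame. -/
def StrLocConn (L : Type*) [Order.Frame L] : Prop :=
  ∀ u : L, ∀ x ∈ oSub u, ∃ v : L, SubConnected (oSub v) ∧ oSub v ⊆ oSub u ∧ x ∈ oSub v

/-- A component of a sublocale `T`: a nonvoid connected sublocale, maximal among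
connected sublocales of `T`. -/
def IsComponent (D T : Set L) : Prop :=
  IsSublocale D ∧ D ⊆ T ∧ D ≠ ({⊤} : Set L) ∧ SubConnected D ∧
    ∀ S : Set L, IsSublocale S → S ⊆ T → SubConnected S → Meets S D → S ⊆ D

/-- Normally separated sublocales. -/
def NormSep (S T : Set L) : Prop :=
  ∃ u v : L, oSub u ∩ oSub v = ({⊤} : Set L) ∧ S ⊆ oSub u ∧ T ⊆ oSub v

/-- Normally connected sublocale. -/
def NormConn (C : Set L) : Prop :=
  ∀ S T : Set L, IsSublocale S → IsSublocale T → vee S T = C → NormSep S T →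
    S = ({⊤} : Set L) ∨ T = ({⊤} : Set L)

/-- A simple sublocale: complemented with both itself and its supplement connected. -/
def SimpleSub (S : Set L) : Prop :=
  IsSublocale S ∧ ComplementedSub S ∧ SubConnected S ∧ SubConnected (suppl S)



lemma sSup_himp' (U : Set L) (x : L) : sSup U ⇨ x = ⨅ u ∈ U, u ⇨ x := by
  apply le_antisymm
  · exact le_iInf₂ fun u hu => himp_le_himp (le_sSup hu) le_rfl
  · rw [le_himp_iff, inf_sSup_eq]
    exact iSup₂_le fun u hu =>
      (inf_le_inf_right u (iInf₂_le u hu)).trans (le_himp_iff.mp le_rfl)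

lemma top_mem_sub {B : Set L} (hB : IsSublocale B) : ⊤ ∈ B := by
  have := hB.1 ∅ (Set.empty_subset B)
  simpa using this

lemma himp_mem_oSub (u x : L) : u ⇨ x ∈ oSub u := by
  simp [oSub, himp_idem]

lemma oSub_sublocale (u : L) : IsSublocale (oSub u) := by
  constructor
  · intro M hM
    refine le_antisymm (le_sInf fun m hm => ?_) le_himp
    calc u ⇨ sInf M ≤ u ⇨ m := himp_le_himp le_rfl (sInf_le hm)
    _ = m := hM hm
  · intro x s hs
    show u ⇨ (x ⇨ s) = x ⇨ s
    rw [himp_left_comm, hs]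

lemma inter_sublocale {B C : Set L} (hB : IsSublocale B) (hC : IsSublocale C) :
    IsSublocale (B ∩ C) := by
  refine ⟨fun M hM => ⟨hB.1 M fun m hm => (hM hm).1, hC.1 M fun m hm => (hM hm).2⟩,
    fun x s hs => ⟨hB.2 x s hs.1, hC.2 x s hs.2⟩⟩

/-- A himp-closed set disjoint from `oSub a` is contained in `cSub a`. -/
lemma subset_cSub_of_disj {B : Set L} (hB : ∀ x : L, ∀ s ∈ B, x ⇨ s ∈ B) {a : L}
    (h : B ∩ oSub a ⊆ {⊤}) : B ⊆ cSub a := by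
  intro x hx
  have h1 : a ⇨ x ∈ B ∩ oSub a := ⟨hB a x hx, himp_mem_oSub a x⟩
  have h2 : a ⇨ x = ⊤ := h h1
  exact himp_eq_top_iff.mp h2

/-- A himp-closed set disjoint from `cSub a` is contained in `oSub a`. -/
lemma subset_oSub_of_disj {B : Set L} (hB : ∀ x : L, ∀ s ∈ B, x ⇨ s ∈ B) {a : L}
    (h : B ∩ cSub a ⊆ {⊤}) : B ⊆ oSub a := by
  intro x hx
  have h1 : (a ⇨ x) ⇨ x ∈ B ∩ cSub a := by
    refine ⟨hB _ x hx, ?_⟩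
    show a ≤ (a ⇨ x) ⇨ x
    rw [le_himp_iff, inf_comm]
    exact himp_inf_le
  have h2 : (a ⇨ x) ⇨ x = ⊤ := h h1
  exact le_antisymm (himp_eq_top_iff.mp h2) le_himp

lemma oSub_subset_oSub_sup (u v : L) : oSub u ⊆ oSub (u ⊔ v) := by
  intro x hx
  show (u ⊔ v) ⇨ x = x
  rw [sup_himp_distrib, hx]
  exact inf_eq_left.mpr le_himp

lemma intr_subset {S : Set L} (hS : IsSublocale S) : oSub (intIdx S) ⊆ S := by
  intro x hx
  have hx' : sSup {u | oSub u ⊆ S} ⇨ x = x := hx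
  rw [sSup_himp'] at hx'
  have : (⨅ u ∈ {u | oSub u ⊆ S}, u ⇨ x) = sInf ((fun u => u ⇨ x) '' {u | oSub u ⊆ S}) := by
    rw [sInf_image]
  rw [this] at hx'
  rw [← hx']
  refine hS.1 _ ?_
  rintro - ⟨u, hu, rfl⟩
  exact hu (himp_mem_oSub u x)

lemma mem_vee_left {S T : Set L} : S ⊆ vee S T := by
  intro s hs
  exact ⟨{s}, by simp [Set.singleton_subset_iff, hs], by simp⟩

lemma mem_vee_right {S T : Set L} : T ⊆ vee S T := by
  intro s hs
  exact ⟨{s}, by simp [Set.singleton_subset_iff, hs], by simp⟩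

theorem stmt18 (A : Set L) (hA : IsSublocale A) :
    (SubConnected A →
      ∀ u : L, A ⊆ oSub u →
        ∃ C : Set L, IsSublocale C ∧ SubConnected C ∧ A ⊆ C ∧ C ⊆ oSub u) ∧
    ((∀ u : L, A ⊆ oSub u →
        ∃ C : Set L, IsSublocale C ∧ SubConnected C ∧ A ⊆ C ∧ C ⊆ oSub u) →
      NormConn A) ∧
    (NormConn A →
      ∀ S : Set L, IsSublocale S → ComplementedSub S →
        Meets A S → Meets A (suppl S) → Meets A (bd S)) := by
  have key2 : (∀ u : L, A ⊆ oSub u →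
        ∃ C : Set L, IsSublocale C ∧ SubConnected C ∧ A ⊆ C ∧ C ⊆ oSub u) →
      NormConn A := by
    intro H S T hS hT hvee ⟨u, v, hdisj, hSu, hTv⟩
    -- A ⊆ oSub (u ⊔ v)
    have hAsub : A ⊆ oSub (u ⊔ v) := by
      rw [← hvee]
      rintro x ⟨M, hM, rfl⟩
      refine (oSub_sublocale (u ⊔ v)).1 M fun m hm => ?_
      rcases hM hm with h | h
      · exact oSub_subset_oSub_sup u v (hSu h)
      · rw [sup_comm]; exact oSub_subset_oSub_sup v u (hTv h)
    obtain ⟨C, hCsub, hCconn, hAC, hCo⟩ := H (u ⊔ v) hAsub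
    -- oSub u ⊆ cSub v and oSub v ⊆ cSub u
    have houv : oSub u ⊆ cSub (v : L) := by
      intro x hx
      have h1 : v ⇨ x ∈ oSub u ∩ oSub v := by
        constructor
        · show u ⇨ (v ⇨ x) = v ⇨ x
          rw [himp_left_comm, hx]
        · exact himp_mem_oSub v x
      rw [hdisj] at h1
      exact himp_eq_top_iff.mp h1
    have hovu : oSub v ⊆ cSub (u : L) := by
      intro x hx
      have h1 : u ⇨ x ∈ oSub u ∩ oSub v := by
        refine ⟨himp_mem_oSub u x, ?_⟩
        show v ⇨ (u ⇨ x) = u ⇨ x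
        rw [himp_left_comm, hx]
      rw [hdisj] at h1
      exact himp_eq_top_iff.mp h1
    -- apply connectedness of C to closed sets cSub v, cSub u
    have hsep : C ⊆ vee (cSub (v : L)) (cSub u) := by
      intro x hx
      have hxo : (u ⊔ v) ⇨ x = x := hCo hx
      refine ⟨{u ⇨ x, v ⇨ x}, ?_, ?_⟩
      · rintro y (rfl | rfl)
        · exact Or.inl (houv (himp_mem_oSub u x))
        · exact Or.inr (hovu (himp_mem_oSub v x))
      · rw [sInf_pair, ← sup_himp_distrib, hxo]
    have hdcc : C ∩ cSub (v : L) ∩ cSub u = ({⊤} : Set L) := by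
      apply Set.eq_singleton_iff_unique_mem.mpr
      constructor
      · exact ⟨⟨top_mem_sub hCsub, le_top⟩, le_top⟩
      · rintro x ⟨⟨hxC, hxv⟩, hxu⟩
        have : (u ⊔ v) ⇨ x = x := hCo hxC
        rw [himp_eq_top_iff.mpr (sup_le hxu hxv)] at this
        exact this.symm
    rcases hCconn v u hsep hdcc with h | h
    · left
      apply Set.eq_singleton_iff_unique_mem.mpr
      refine ⟨top_mem_sub hS, fun x hx => ?_⟩
      have : x ∈ C ∩ cSub (v : L) := ⟨hAC (hvee ▸ mem_vee_left hx), houv (hSu hx)⟩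
      rw [h] at this; exact this
    · right
      apply Set.eq_singleton_iff_unique_mem.mpr
      refine ⟨top_mem_sub hT, fun x hx => ?_⟩
      have : x ∈ C ∩ cSub (u : L) := ⟨hAC (hvee ▸ mem_vee_right hx), hovu (hTv hx)⟩
      rw [h] at this; exact this
  refine ⟨fun hconn u hu => ⟨A, hA, hconn, subset_rfl, hu⟩, key2, ?_⟩
  intro hNC S hS hScomp hMS hMsup
  intro hbd
  -- hbd : A ∩ bd S = {⊤}
  set a := sInf S with ha
  set i := intIdx S with hi
  have hiS : oSub i ⊆ S := intr_subset hS
  -- A ⊆ oSub (a ⊔ i)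
  have hbd_eq : bd S = cSub (a ⊔ i) := by
    show Set.Ici a ∩ Set.Ici i = Set.Ici (a ⊔ i)
    ext x; simp [sup_le_iff]
  have hAo : A ⊆ oSub (a ⊔ i) := by
    refine subset_oSub_of_disj hA.2 ?_
    rw [← hbd_eq, hbd]
  -- the normal separation
  have hdisj : oSub a ∩ oSub i = ({⊤} : Set L) := by
    apply Set.eq_singleton_iff_unique_mem.mpr
    refine ⟨⟨himp_top, himp_top⟩, ?_⟩
    rintro x ⟨hxa, hxi⟩
    have hxS : x ∈ S := hiS hxi
    have : a ≤ x := sInf_le hxS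
    rw [← hxa]
    exact himp_eq_top_iff.mpr this
  have hveeA : vee (A ∩ oSub a) (A ∩ oSub i) = A := by
    apply Set.Subset.antisymm
    · rintro x ⟨M, hM, rfl⟩
      refine hA.1 M fun m hm => ?_
      rcases hM hm with h | h
      · exact h.1
      · exact h.1
    · intro x hx
      have hxo : (a ⊔ i) ⇨ x = x := hAo hx
      refine ⟨{a ⇨ x, i ⇨ x}, ?_, ?_⟩
      · rintro y (rfl | rfl)
        · exact Or.inl ⟨hA.2 a x hx, himp_mem_oSub a x⟩
        · exact Or.inr ⟨hA.2 i x hx, himp_mem_oSub i x⟩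
      · rw [sInf_pair, ← sup_himp_distrib, hxo]
  have hsubl_a : IsSublocale (A ∩ oSub a) := inter_sublocale hA (oSub_sublocale a)
  have hsubl_i : IsSublocale (A ∩ oSub i) := inter_sublocale hA (oSub_sublocale i)
  have hsep : NormSep (A ∩ oSub a) (A ∩ oSub i) :=
    ⟨a, i, hdisj, Set.inter_subset_right, Set.inter_subset_right⟩
  rcases hNC _ _ hsubl_a hsubl_i hveeA hsep with h | h
  · -- A ⊆ cSub a ; contradict Meets A (suppl S)
    have hAc : A ⊆ cSub a := subset_cSub_of_disj hA.2 (h ▸ subset_rfl)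
    -- suppl S ⊆ cSub i
    have hsuppl_sub : ∀ x : L, ∀ s ∈ suppl S, x ⇨ s ∈ suppl S := by
      intro x s hs T hT
      exact hT.1.2 x s (hs T hT)
    have hsuppl_c : suppl S ⊆ cSub i := by
      refine subset_cSub_of_disj hsuppl_sub ?_
      intro x ⟨hx1, hx2⟩
      have hxS : x ∈ S ∩ suppl S := ⟨hiS hx2, hx1⟩
      rw [hScomp] at hxS
      exact hxS
    apply hMsup
    apply Set.eq_singleton_iff_unique_mem.mpr
    constructor
    · refine ⟨top_mem_sub hA, ?_⟩
      intro T hT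
      exact top_mem_sub hT.1
    · rintro x ⟨hxA, hxs⟩
      have : x ∈ A ∩ bd S := ⟨hxA, hAc hxA, hsuppl_c hxs⟩
      rw [hbd] at this
      exact this
  · -- A ⊆ cSub i ; contradict Meets A S
    have hAc : A ⊆ cSub i := subset_cSub_of_disj hA.2 (h ▸ subset_rfl)
    apply hMS
    apply Set.eq_singleton_iff_unique_mem.mpr
    refine ⟨⟨top_mem_sub hA, top_mem_sub hS⟩, ?_⟩
    rintro x ⟨hxA, hxS⟩
    have : x ∈ A ∩ bd S := ⟨hxA, sInf_le hxS, hAc hxA⟩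
    rw [hbd] at this
    exact this
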